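/- arXiv:2006.03399 — 6 statements merged into one kernel-verified Lean document; each statement's English description precedes it below -/
import Mathlib

section
/- Consider jobs 1,...,n with positive processing times p_j and due dates d_1 ≤ ... ≤ d_n (EDD order). The identity sequence (jobs in EDD order) minimizes the maximum lateness max_j (C_j − d_j) over all permutations of the jobs. -/
/-!
Fix a job `i` and let `m` be the last position at which the sequence `σ` schedules one of the
jobs `1, …, i`. Under `σ` all of these jobs are finished when job `σ m` completes, so the EDD
completion time of `i` is at most that of `σ m` under `σ`, while `d_{σ m} ≤ d_i` since `σ m ≤ i`.
Hence the lateness of `i` under EDD is at most the lateness of `σ m` under `σ`.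
-/

open Finset

section

variable {ι M : Type*} [LinearOrder ι] [Fintype ι] [LocallyFiniteOrderBot ι] [AddCommMonoid M]

theorem sum_Iic_eq_sum_filter_perm (p : ι → M) (σ : Equiv.Perm ι) (i : ι) :
    ∑ k ∈ Iic i, p k = ∑ k ∈ univ.filter (fun k => σ k ≤ i), p (σ k) :=
  (sum_equiv σ (by simp) (fun _ _ => rfl)).symm

theorem exists_perm_le_and_sum_Iic_le [Preorder M] [CanonicallyOrderedAdd M] (p : ι → M)
    (σ : Equiv.Perm ι) (i : ι) :
    ∃ m, σ m ≤ i ∧ ∑ k ∈ Iic i, p k ≤ ∑ k ∈ Iic m, p (σ k) := by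
  set T := univ.filter (fun k => σ k ≤ i)
  have hT : T.Nonempty := ⟨σ.symm i, by simp [T]⟩
  refine ⟨T.max' hT, (mem_filter.1 (T.max'_mem hT)).2, ?_⟩
  rw [sum_Iic_eq_sum_filter_perm p σ i]
  exact sum_le_sum_of_subset fun k hk => mem_Iic.2 (T.le_max' k hk)

end

theorem stmt2_general {n : ℕ} (p : Fin n → ℕ) (d : Fin n → ℤ)
    (hd : Monotone d) (hne : (Finset.univ : Finset (Fin n)).Nonempty)
    (σ : Equiv.Perm (Fin n)) :
    (Finset.univ.sup' hne fun i : Fin n =>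
        ((∑ k ∈ Finset.Iic i, p k : ℕ) : ℤ) - d i) ≤
      Finset.univ.sup' hne fun i : Fin n =>
        ((∑ k ∈ Finset.Iic i, p (σ k) : ℕ) : ℤ) - d (σ i) := by
  refine sup'_le _ _ fun i _ => ?_
  obtain ⟨m, hσm, hC⟩ := exists_perm_le_and_sum_Iic_le p σ i
  exact le_sup'_of_le _ (mem_univ m) (sub_le_sub (Nat.cast_le.2 hC) (hd hσm))

/-- EDD optimality. If due dates are nondecreasing (`Monotone d`),
then the identity sequence minimizes the maximum lateness `max_j (C_j - d_j)`
over all permutations. -/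
theorem stmt2 {n : ℕ} (p : Fin n → ℕ) (hp : ∀ j, 0 < p j) (d : Fin n → ℤ)
    (hd : Monotone d) (hne : (Finset.univ : Finset (Fin n)).Nonempty)
    (σ : Equiv.Perm (Fin n)) :
    (Finset.univ.sup' hne fun i : Fin n =>
        ((∑ k ∈ Finset.Iic i, p k : ℕ) : ℤ) - d i) ≤
      Finset.univ.sup' hne fun i : Fin n =>
        ((∑ k ∈ Finset.Iic i, p (σ k) : ℕ) : ℤ) - d (σ i) :=
  stmt2_general p d hd hne σ
end

section
/- In the reduction of Theorem 1 (from Even-Odd-Partition to 1|er|ΣC_j): if a sequence σ of the 2m+2 constructed jobs is feasible (renting-period length at most K^r = p_{2m+2} + mB² + B) and has total completion time at most 2(C+D)+1, then job 2m+2 (the big r-job with processing time C+D+1) is scheduled last in σ. -/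
/-!
If the big r-job is not last, then both it and the last job complete no earlier than its
processing time `C + D + 1`, so the total completion time is at least `2(C + D + 1)`.
-/

/-- completion time of job `j` under permutation `σ` (σ maps positions to jobs). -/
def Cjob {N : ℕ} (p : Fin N → ℕ) (σ : Equiv.Perm (Fin N)) (j : Fin N) : ℕ :=
  ∑ i ∈ Finset.Iic (σ.symm j), p (σ i)

/-- `D = Σ_{j ≤ 2m} p_j = 2mB² + 2B` in the Even-Odd-Partition reduction. -/
def DEOP (m B : ℕ) : ℕ := 2*m*B^2 + 2*B

/-- `C = Σ_{k=1}^m (m+1-k)(p_{2k-1}+p_{2k}) + (mB²+B)(m+1)` (0-indexed pairs). -/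
def CEOP (m B : ℕ) (a : Fin (2*m) → ℕ) : ℕ :=
  (∑ k : Fin m, (m - (k : ℕ)) *
      ((B^2 + a ⟨2*(k : ℕ), by have := k.isLt; omega⟩) +
       (B^2 + a ⟨2*(k : ℕ)+1, by have := k.isLt; omega⟩))) +
    (m*B^2 + B)*(m+1)

/-- processing times of the reduction instance: jobs `0..2m-1` have `p = B² + a_j`,
job `2m` (the zero-length r-job, "job 2m+1" in the paper) has `p = 0`, and
job `2m+1` (the big r-job, "job 2m+2" in the paper) has `p = C + D + 1`. -/
def pEOP (m B : ℕ) (a : Fin (2*m) → ℕ) : Fin (2*m+2) → ℕ := fun j =>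
  if h : (j : ℕ) < 2*m then B^2 + a ⟨j, h⟩
  else if (j : ℕ) = 2*m then 0
  else CEOP m B a + DEOP m B + 1

/-- the zero-length r-job. -/
def zJob (m : ℕ) : Fin (2*m+2) := ⟨2*m, by omega⟩

/-- the big r-job. -/
def bJob (m : ℕ) : Fin (2*m+2) := ⟨2*m+1, by omega⟩

/-- feasibility: the renting period (from the start of the first r-job to the
completion of the last r-job) is at most `K^r = p_{2m+2} + mB² + B`. -/
def feasEOP (m B : ℕ) (a : Fin (2*m) → ℕ) (σ : Equiv.Perm (Fin (2*m+2))) : Prop :=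
  max ((Cjob (pEOP m B a) σ (zJob m) : ℤ)) ((Cjob (pEOP m B a) σ (bJob m) : ℤ)) -
      min ((Cjob (pEOP m B a) σ (zJob m) : ℤ) - pEOP m B a (zJob m))
        ((Cjob (pEOP m B a) σ (bJob m) : ℤ) - pEOP m B a (bJob m)) ≤
    (pEOP m B a (bJob m) : ℤ) + m*B^2 + B

/-- total completion time. -/
def TCEOP (m B : ℕ) (a : Fin (2*m) → ℕ) (σ : Equiv.Perm (Fin (2*m+2))) : ℕ :=
  ∑ j : Fin (2*m+2), Cjob (pEOP m B a) σ j

theorem le_Cjob {N : ℕ} (p : Fin N → ℕ) (σ : Equiv.Perm (Fin N)) (j : Fin N) :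
    p j ≤ Cjob p σ j := by
  calc p j = p (σ (σ.symm j)) := by rw [Equiv.apply_symm_apply]
    _ ≤ Cjob p σ j :=
      Finset.single_le_sum (f := fun i => p (σ i)) (fun _ _ => Nat.zero_le _)
        (Finset.mem_Iic.mpr le_rfl)

theorem Cjob_last {n : ℕ} (p : Fin (n + 1) → ℕ) (σ : Equiv.Perm (Fin (n + 1))) :
    Cjob p σ (σ (Fin.last n)) = ∑ j, p j := by
  have hall : Finset.Iic (Fin.last n) = Finset.univ :=
    Finset.eq_univ_of_forall fun i => Finset.mem_Iic.mpr (Fin.le_last i)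
  rw [Cjob, Equiv.symm_apply_apply, hall, Equiv.sum_comp σ p]

theorem two_mul_le_sum_Cjob_of_ne_last {n : ℕ} (p : Fin (n + 1) → ℕ)
    (σ : Equiv.Perm (Fin (n + 1))) {j : Fin (n + 1)} (hj : σ (Fin.last n) ≠ j) :
    2 * p j ≤ ∑ k, Cjob p σ k := by
  have hlast : p j ≤ Cjob p σ (σ (Fin.last n)) := by
    rw [Cjob_last]
    exact Finset.single_le_sum (fun _ _ => Nat.zero_le _) (Finset.mem_univ j)
  calc 2 * p j ≤ Cjob p σ j + Cjob p σ (σ (Fin.last n)) := by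
        have := le_Cjob p σ j
        omega
    _ = ∑ k ∈ {j, σ (Fin.last n)}, Cjob p σ k := (Finset.sum_pair hj.symm).symm
    _ ≤ ∑ k, Cjob p σ k :=
        Finset.sum_le_sum_of_subset_of_nonneg (Finset.subset_univ _)
          (fun _ _ _ => Nat.zero_le _)

theorem pEOP_bJob (m B : ℕ) (a : Fin (2*m) → ℕ) :
    pEOP m B a (bJob m) = CEOP m B a + DEOP m B + 1 := by
  simp [pEOP, bJob]

/-- in the Even-Odd-Partition reduction, any feasible sequence with
total completion time at most `2(C+D)+1` schedules the big r-job last. -/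
theorem stmt3 (m B : ℕ) (a : Fin (2*m) → ℕ)
    (σ : Equiv.Perm (Fin (2*m+2)))
    (hTC : TCEOP m B a σ ≤ 2*(CEOP m B a + DEOP m B) + 1) :
    σ ⟨2*m+1, by omega⟩ = bJob m := by
  by_contra hne
  have hbig : 2 * pEOP m B a (bJob m) ≤ TCEOP m B a σ :=
    two_mul_le_sum_Cjob_of_ne_last (pEOP m B a) σ hne
  rw [pEOP_bJob] at hbig
  omega
end

section
/- Given integers a_1,...,a_m with Σ a_i = 2B, the constructed instance of 1|er|max L_j (jobs 1..m with p_j = a_j and d_j = 2B+1; r-jobs m+1 with p=1, d=B+1 and m+2 with p=1, d=2B+2; renting budget K^r = B+2) admits a feasible sequence with maximum lateness at most 0 if and only if there is a subset of {a_1,...,a_m} with total value B. -/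
/-- processing times: jobs `0..m-1` have `p = a_j`; the two r-jobs `m` and `m+1`
have `p = 1`. -/
def pPar (m : ℕ) (a : Fin m → ℕ) : Fin (m+2) → ℕ := fun j =>
  if h : (j : ℕ) < m then a ⟨j, h⟩ else 1

/-- due dates: `d_j = 2B+1` for ordinary jobs, `d_{m+1} = B+1` (job `m`),
`d_{m+2} = 2B+2` (job `m+1`). -/
def dPar (m B : ℕ) : Fin (m+2) → ℤ := fun j =>
  if (j : ℕ) < m then 2*B+1 else if (j : ℕ) = m then B+1 else 2*B+2

/-- the r-job with due date `B+1`. -/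
def zP (m : ℕ) : Fin (m+2) := ⟨m, by omega⟩

/-- the r-job with due date `2B+2`. -/
def bP (m : ℕ) : Fin (m+2) := ⟨m+1, by omega⟩

/-- feasibility: renting period (start of first r-job to completion of last
r-job) at most `K^r = B+2`. -/
def feasPar (m B : ℕ) (a : Fin m → ℕ) (σ : Equiv.Perm (Fin (m+2))) : Prop :=
  max ((Cjob (pPar m a) σ (zP m) : ℤ)) ((Cjob (pPar m a) σ (bP m) : ℤ)) -
      min ((Cjob (pPar m a) σ (zP m) : ℤ) - pPar m a (zP m))
        ((Cjob (pPar m a) σ (bP m) : ℤ) - pPar m a (bP m)) ≤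
    (B : ℤ) + 2

section Schedule

variable {N : ℕ} (p : Fin N → ℕ) (σ : Equiv.Perm (Fin N))

lemma Cjob_eq_sum_filter (j : Fin N) :
    Cjob p σ j = ∑ k with σ.symm k ≤ σ.symm j, p k := by
  unfold Cjob
  refine Finset.sum_nbij' σ σ.symm ?_ ?_ ?_ ?_ ?_ <;> simp [Finset.mem_Iic]

lemma Cjob_apply_last {n : ℕ} (p : Fin (n + 1) → ℕ) (σ : Equiv.Perm (Fin (n + 1))) :
    Cjob p σ (σ (Fin.last n)) = ∑ k, p k := by
  rw [Cjob_eq_sum_filter, Finset.filter_true_of_mem]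
  simp [Fin.le_last]

variable {α : Type*} [LinearOrder α] {c : Fin N → α}

lemma Cjob_le_sum_filter_le (hσ : Monotone (c ∘ σ)) (j : Fin N) :
    Cjob p σ j ≤ ∑ k with c k ≤ c j, p k := by
  rw [Cjob_eq_sum_filter]
  exact Finset.sum_le_sum_of_subset
    (Finset.monotone_filter_right _ fun k _ hk => by simpa using hσ hk)

lemma sum_filter_lt_add_le_Cjob (hσ : Monotone (c ∘ σ)) (j : Fin N) :
    ∑ k with c k < c j, p k + p j ≤ Cjob p σ j := by
  rw [Cjob_eq_sum_filter, add_comm, ← Finset.sum_insert (by simp)]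
  refine Finset.sum_le_sum_of_subset fun k hk => ?_
  rcases Finset.mem_insert.1 hk with rfl | hk
  · simp
  · refine Finset.mem_filter.2 ⟨Finset.mem_univ _, le_of_lt (hσ.reflect_lt ?_)⟩
    simpa using (Finset.mem_filter.1 hk).2

end Schedule

section Instance

variable {m : ℕ}

lemma zP_eq : zP m = (Fin.last m).castSucc := rfl

lemma bP_eq : bP m = Fin.last (m + 1) := rfl

lemma zP_ne_bP : zP m ≠ bP m := by simp [zP, bP]

lemma sum_univ_eq_add_zP_add_bP {M : Type*} [AddCommMonoid M] (f : Fin (m + 2) → M) :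
    ∑ k, f k = ∑ i : Fin m, f i.castSucc.castSucc + f (zP m) + f (bP m) := by
  rw [Fin.sum_univ_castSucc, Fin.sum_univ_castSucc]
  rfl

variable (a : Fin m → ℕ)

@[simp] lemma pPar_castSucc_castSucc (i : Fin m) : pPar m a i.castSucc.castSucc = a i := by
  simp [pPar]

@[simp] lemma pPar_zP : pPar m a (zP m) = 1 := by simp [pPar, zP]

@[simp] lemma pPar_bP : pPar m a (bP m) = 1 := by simp [pPar, bP]

lemma sum_filter_pPar (P : Fin (m + 2) → Prop) [DecidablePred P] :
    ∑ k with P k, pPar m a k = ∑ i with P i.castSucc.castSucc, a i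
      + (if P (zP m) then 1 else 0) + (if P (bP m) then 1 else 0) := by
  simp only [Finset.sum_filter, sum_univ_eq_add_zP_add_bP, pPar_castSucc_castSucc, pPar_zP,
    pPar_bP]

lemma sum_pPar : ∑ k, pPar m a k = ∑ i, a i + 2 := by
  simp [sum_univ_eq_add_zP_add_bP]

lemma eq_bP_of_dPar_ge {B : ℕ} {j : Fin (m + 2)} (h : 2 * (B : ℤ) + 2 ≤ dPar m B j) :
    j = bP m := by
  unfold dPar at h
  ext
  split_ifs at h <;> simp [bP] <;> omega

end Instance

section Forward

variable {m B : ℕ} {a : Fin m → ℕ} {σ : Equiv.Perm (Fin (m + 2))}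

lemma symm_bP_eq_last (hsum : ∑ i, a i = 2 * B)
    (hlate : ∀ j, (Cjob (pPar m a) σ j : ℤ) - dPar m B j ≤ 0) :
    σ.symm (bP m) = Fin.last (m + 1) := by
  have h := hlate (σ (Fin.last (m + 1)))
  rw [Cjob_apply_last, sum_pPar, hsum] at h
  rw [← eq_bP_of_dPar_ge (B := B) (by push_cast at h; linarith), Equiv.symm_apply_apply]

lemma exists_subset_sum_of_feasible (hsum : ∑ i, a i = 2 * B) (hfeas : feasPar m B a σ)
    (hlate : ∀ j, (Cjob (pPar m a) σ j : ℤ) - dPar m B j ≤ 0) :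
    ∃ S : Finset (Fin m), ∑ i ∈ S, a i = B := by
  have hlast := symm_bP_eq_last hsum hlate
  have hCb : Cjob (pPar m a) σ (bP m) = 2 * B + 2 := by
    have : bP m = σ (Fin.last (m + 1)) := by rw [← hlast, Equiv.apply_symm_apply]
    rw [this, Cjob_apply_last, sum_pPar, hsum]
  have hCz : Cjob (pPar m a) σ (zP m) = B + 1 := by
    have hz := hlate (zP m)
    rw [show dPar m B (zP m) = B + 1 by simp [dPar, zP]] at hz
    unfold feasPar at hfeas
    rw [hCb, pPar_zP, pPar_bP] at hfeas
    omega
  have hzb : ¬ σ.symm (bP m) ≤ σ.symm (zP m) := by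
    rw [hlast, not_le, Fin.lt_last_iff_ne_last, ← hlast]
    exact σ.symm.injective.ne zP_ne_bP
  refine ⟨({i | σ.symm i.castSucc.castSucc ≤ σ.symm (zP m)} : Finset (Fin m)), ?_⟩
  rw [Cjob_eq_sum_filter, sum_filter_pPar, if_pos le_rfl, if_neg hzb] at hCz
  omega

end Forward

section Backward

variable {m : ℕ}

def partitionKey (S : Finset (Fin m)) : Fin (m + 2) → ℕ :=
  Fin.lastCases 3 (Fin.lastCases 1 fun i => if i ∈ S then 0 else 2)

variable (S : Finset (Fin m))

@[simp] lemma partitionKey_castSucc_castSucc (i : Fin m) :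
    partitionKey S i.castSucc.castSucc = if i ∈ S then 0 else 2 := by
  simp [partitionKey]

@[simp] lemma partitionKey_zP : partitionKey S (zP m) = 1 := by
  simp [partitionKey, zP_eq]

@[simp] lemma partitionKey_bP : partitionKey S (bP m) = 3 := by
  simp [partitionKey, bP_eq]

variable {B : ℕ} {a : Fin m → ℕ}

lemma Cjob_sort_partitionKey_zP (hS : ∑ i ∈ S, a i = B) :
    Cjob (pPar m a) (Tuple.sort (partitionKey S)) (zP m) = B + 1 := by
  have hσ := Tuple.monotone_sort (partitionKey S)
  have hle := Cjob_le_sum_filter_le (pPar m a) _ hσ (zP m)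
  have hge := sum_filter_lt_add_le_Cjob (pPar m a) _ hσ (zP m)
  have hlt : ∑ k with partitionKey S k < 1, pPar m a k = B := by simp [sum_filter_pPar, hS]
  have hle' : ∑ k with partitionKey S k ≤ 1, pPar m a k = B + 1 := by
    simp [sum_filter_pPar, apply_ite (· ≤ (1 : ℕ)), hS]
  rw [partitionKey_zP] at hle hge
  rw [pPar_zP] at hge
  omega

lemma Cjob_sort_partitionKey_bP (hsum : ∑ i, a i = 2 * B) :
    Cjob (pPar m a) (Tuple.sort (partitionKey S)) (bP m) = 2 * B + 2 := by
  have hσ := Tuple.monotone_sort (partitionKey S)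
  have hle := Cjob_le_sum_filter_le (pPar m a) _ hσ (bP m)
  have hge := sum_filter_lt_add_le_Cjob (pPar m a) _ hσ (bP m)
  have hlt : ∑ k with partitionKey S k < 3, pPar m a k = 2 * B + 1 := by
    simp [sum_filter_pPar, apply_ite (· < (3 : ℕ)), hsum]
  have hle' : ∑ k with partitionKey S k ≤ 3, pPar m a k = 2 * B + 2 := by
    simp [sum_filter_pPar, apply_ite (· ≤ (3 : ℕ)), hsum]
  rw [partitionKey_bP] at hle hge
  rw [pPar_bP] at hge
  omega

lemma Cjob_sort_partitionKey_le (hsum : ∑ i, a i = 2 * B) {j : Fin (m + 2)}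
    (hj : partitionKey S j ≤ 2) :
    Cjob (pPar m a) (Tuple.sort (partitionKey S)) j ≤ 2 * B + 1 :=
  calc Cjob (pPar m a) (Tuple.sort (partitionKey S)) j
      ≤ ∑ k with partitionKey S k ≤ partitionKey S j, pPar m a k :=
        Cjob_le_sum_filter_le _ _ (Tuple.monotone_sort _) j
    _ ≤ ∑ k with partitionKey S k ≤ 2, pPar m a k :=
        Finset.sum_le_sum_of_subset (Finset.monotone_filter_right _ fun _ _ hk => hk.trans hj)
    _ = 2 * B + 1 := by simp [sum_filter_pPar, apply_ite (· ≤ (2 : ℕ)), hsum]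

lemma feasPar_sort_partitionKey (hsum : ∑ i, a i = 2 * B) (hS : ∑ i ∈ S, a i = B) :
    feasPar m B a (Tuple.sort (partitionKey S)) := by
  unfold feasPar
  rw [Cjob_sort_partitionKey_zP S hS, Cjob_sort_partitionKey_bP S hsum, pPar_zP, pPar_bP]
  push_cast
  omega

lemma lateness_sort_partitionKey_nonpos (hsum : ∑ i, a i = 2 * B) (hS : ∑ i ∈ S, a i = B)
    (j : Fin (m + 2)) :
    (Cjob (pPar m a) (Tuple.sort (partitionKey S)) j : ℤ) - dPar m B j ≤ 0 := by
  induction j using Fin.lastCases with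
  | last => rw [← bP_eq, Cjob_sort_partitionKey_bP S hsum]; simp [dPar, bP]
  | cast j =>
    induction j using Fin.lastCases with
    | last => rw [← zP_eq, Cjob_sort_partitionKey_zP S hS]; simp [dPar, zP]
    | cast i =>
      have := Cjob_sort_partitionKey_le S hsum (j := i.castSucc.castSucc) (by
        simp only [partitionKey_castSucc_castSucc]; split_ifs <;> omega)
      rw [show dPar m B i.castSucc.castSucc = 2 * B + 1 by simp [dPar]]
      omega

end Backward

/-- the Partition reduction instance of `1|er|max L_j` admits a
feasible sequence with maximum lateness at most `0` iff there is a subset of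
the `a_i` summing to `B`. -/
theorem stmt7 (m B : ℕ) (a : Fin m → ℕ) (hsum : ∑ i, a i = 2*B) :
    (∃ σ : Equiv.Perm (Fin (m+2)),
        feasPar m B a σ ∧ ∀ j, (Cjob (pPar m a) σ j : ℤ) - dPar m B j ≤ 0) ↔
      (∃ S : Finset (Fin m), ∑ i ∈ S, a i = B) := by
  constructor
  · rintro ⟨σ, hfeas, hlate⟩
    exact exists_subset_sum_of_feasible hsum hfeas hlate
  · rintro ⟨S, hS⟩
    exact ⟨Tuple.sort (partitionKey S), feasPar_sort_partitionKey S hsum hS,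
      lateness_sort_partitionKey_nonpos S hsum hS⟩
end

section
/- Five-block structure for maximum lateness: for every instance of 1|er|max L_j (jobs in EDD order d_1 ≤ ... ≤ d_n, r-jobs with α = min J^r, β = max J^r, H the o-jobs between α and β) that admits a feasible sequence, there exist sets X*, Y* ⊆ H with max X* < min Y* such that the five-block sequence σ_{X*,Y*} (blocks ordered internally by EDD) is feasible and minimizes maximum lateness among all feasible sequences. -/
variable {n : ℕ}

/-- completion time of job `j` in the schedule given by the list `l`:
total processing time of the prefix of `l` up to and including `j`. -/
def comp (p : Fin n → ℕ) (l : List (Fin n)) (j : Fin n) : ℕ :=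
  ((l.takeWhile fun k => decide (k ≠ j)).map p).sum + p j

/-- the elements of a finset listed in increasing index order. -/
def sortF (s : Finset (Fin n)) : List (Fin n) := s.sort (· ≤ ·)

/-- a schedule is a permutation of all of the jobs. -/
def IsSchedule (l : List (Fin n)) : Prop := l.Perm (List.finRange n)

/-- the renting period of schedule `l`: from the start of the first r-job to
the completion of the last r-job. -/
def rent (p : Fin n → ℕ) (Jr : Finset (Fin n)) (hJr : Jr.Nonempty)
    (l : List (Fin n)) : ℤ :=
  (Jr.sup' hJr fun j => (comp p l j : ℤ)) -
    (Jr.inf' hJr fun j => (comp p l j : ℤ) - p j)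

/-- `H`: the o-jobs with index between `α = min J^r` and `β = max J^r`. -/
def Hset (Jr : Finset (Fin n)) (hJr : Jr.Nonempty) : Finset (Fin n) :=
  (Finset.Icc (Jr.min' hJr) (Jr.max' hJr)) \ Jr

/-- the five-block sequence `σ_{X,Y}`: blocks `J[1,α-1]`, `X`,
`J[α,β] \ (X ∪ Y)`, `Y`, `J[β+1,n]`, each internally in increasing index
(WSPT resp. EDD) order. -/
def fiveBlock (Jr : Finset (Fin n)) (hJr : Jr.Nonempty)
    (X Y : Finset (Fin n)) : List (Fin n) :=
  sortF (Finset.Iio (Jr.min' hJr)) ++ sortF X ++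
    sortF ((Finset.Icc (Jr.min' hJr) (Jr.max' hJr)) \ (X ∪ Y)) ++
    sortF Y ++ sortF (Finset.Ioi (Jr.max' hJr))

/-- maximum lateness of schedule `l`. -/
def Lmax (p : Fin n → ℕ) (d : Fin n → ℤ)
    (hne : (Finset.univ : Finset (Fin n)).Nonempty) (l : List (Fin n)) : ℤ :=
  Finset.univ.sup' hne fun j => (comp p l j : ℤ) - d j

/-
Take an optimal feasible schedule `l`, and let `X` (resp. `Y`) be the jobs of `H` that `l`
processes before its first (resp. after its last) r-job. The middle block of `σ_{X,Y}` consists of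
jobs that `l` processes between its first and last r-job, so the renting period does not grow;
and every job of `σ_{X,Y}` completes no later than some job of no larger index completes in `l`,
so with EDD due dates the maximum lateness does not grow either. Finally, moving into `Y` every
job of `X` that exceeds some job of `Y` keeps the middle block, and a moved job completes no later
than the last job of `Y` below it did before.
-/

open Finset

lemma IsSchedule.nodup {l : List (Fin n)} (hl : IsSchedule l) : l.Nodup :=
  hl.nodup_iff.2 (List.nodup_finRange n)

lemma IsSchedule.mem {l : List (Fin n)} (hl : IsSchedule l) (i : Fin n) : i ∈ l :=
  hl.mem_iff.2 (List.mem_finRange i)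

lemma finite_setOf_isSchedule : {l : List (Fin n) | IsSchedule l}.Finite :=
  (List.finRange n).permutations.toFinset.finite_toSet.subset fun _ hl =>
    mem_coe.2 (List.mem_toFinset.2 (List.mem_permutations.2 hl))

lemma Finset.inf'_le_sup' {ι α : Type*} [Lattice α] {s : Finset ι} (hs : s.Nonempty)
    (f : ι → α) : s.inf' hs f ≤ s.sup' hs f :=
  (inf'_le f hs.choose_spec).trans (le_sup' f hs.choose_spec)

lemma comp_eq_sum_idxOf_lt (p : Fin n → ℕ) {l : List (Fin n)} (hl : IsSchedule l)
    (j : Fin n) : comp p l j = ∑ i with l.idxOf i < l.idxOf j, p i + p j := by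
  have htake : (l.takeWhile fun k => decide (k ≠ j)) = l.take (l.idxOf j) := by
    rw [List.takeWhile_eq_take_findIdx_not, List.idxOf]
    simp only [ne_eq, decide_not, Bool.not_not]
    rfl
  have hset :
      (l.take (l.idxOf j)).toFinset = univ.filter fun i => l.idxOf i < l.idxOf j := by
    ext i
    simp [List.mem_take_iff_idxOf_lt (hl.mem i)]
  rw [comp, htake, ← List.sum_toFinset _ ((l.take_sublist _).nodup hl.nodup), hset]

lemma comp_eq_sum_idxOf_le (p : Fin n → ℕ) {l : List (Fin n)} (hl : IsSchedule l)
    (j : Fin n) : comp p l j = ∑ i with l.idxOf i ≤ l.idxOf j, p i := by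
  have hsplit : univ.filter (fun i => l.idxOf i ≤ l.idxOf j)
      = insert j (univ.filter fun i => l.idxOf i < l.idxOf j) := by
    ext i
    simp only [mem_insert, mem_filter, mem_univ, true_and, le_iff_lt_or_eq,
      List.idxOf_inj (hl.mem i)]
    tauto
  rw [comp_eq_sum_idxOf_lt p hl, hsplit, sum_insert (by simp), add_comm]

lemma comp_le_comp (p : Fin n → ℕ) {l₁ l₂ : List (Fin n)} (hl₁ : IsSchedule l₁)
    (hl₂ : IsSchedule l₂) {j m : Fin n}
    (h : ∀ i, l₂.idxOf i ≤ l₂.idxOf j → l₁.idxOf i ≤ l₁.idxOf m) :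
    comp p l₂ j ≤ comp p l₁ m := by
  rw [comp_eq_sum_idxOf_le p hl₂, comp_eq_sum_idxOf_le p hl₁]
  exact sum_le_sum_of_subset fun i => by simpa using h i

lemma Lmax_le_Lmax_of_prefix_subset (p : Fin n → ℕ) {d : Fin n → ℤ} (hd : Monotone d)
    (hne : (univ : Finset (Fin n)).Nonempty) {l₁ l₂ : List (Fin n)} (hl₁ : IsSchedule l₁)
    (hl₂ : IsSchedule l₂)
    (h : ∀ j, ∃ m ≤ j, ∀ i, l₂.idxOf i ≤ l₂.idxOf j → l₁.idxOf i ≤ l₁.idxOf m) :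
    Lmax p d hne l₂ ≤ Lmax p d hne l₁ := by
  refine sup'_le _ _ fun j _ => ?_
  obtain ⟨m, hmj, hm⟩ := h j
  calc (comp p l₂ j : ℤ) - d j ≤ comp p l₁ m - d m := by
        have := comp_le_comp p hl₁ hl₂ hm
        have := hd hmj
        omega
    _ ≤ Lmax p d hne l₁ := le_sup' (fun j => (comp p l₁ j : ℤ) - d j) (mem_univ m)

lemma Lmax_le_Lmax_of_forall_le_or_idxOf_lt (p : Fin n → ℕ) {d : Fin n → ℤ}
    (hd : Monotone d) (hne : (univ : Finset (Fin n)).Nonempty) {l₁ l₂ : List (Fin n)}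
    (hl₁ : IsSchedule l₁) (hl₂ : IsSchedule l₂)
    (h : ∀ i j, l₂.idxOf i ≤ l₂.idxOf j → i ≤ j ∨ l₁.idxOf i < l₁.idxOf j) :
    Lmax p d hne l₂ ≤ Lmax p d hne l₁ := by
  refine Lmax_le_Lmax_of_prefix_subset p hd hne hl₁ hl₂ fun j => ?_
  obtain ⟨m, hm, hmax⟩ := exists_max_image {i | l₂.idxOf i ≤ l₂.idxOf j} l₁.idxOf
    ⟨j, by simp⟩
  have hj := hmax j (by simp)
  refine ⟨m, ?_, fun i hi => hmax i (by simpa using hi)⟩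
  rcases h m j (by simpa using hm) with hmj | hmj
  · exact hmj
  · omega

lemma rent_eq_sum (p : Fin n → ℕ) (Jr : Finset (Fin n)) (hJr : Jr.Nonempty)
    {l : List (Fin n)} (hl : IsSchedule l) :
    rent p Jr hJr l = ∑ i with Jr.inf' hJr l.idxOf ≤ l.idxOf i ∧
      l.idxOf i ≤ Jr.sup' hJr l.idxOf, (p i : ℤ) := by
  set F : ℕ → ℤ := fun k => ∑ i with l.idxOf i ≤ k, (p i : ℤ)
  set G : ℕ → ℤ := fun k => ∑ i with l.idxOf i < k, (p i : ℤ)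
  have hF : Monotone F := fun a b hab => sum_le_sum_of_subset_of_nonneg
    (fun i => by simp only [mem_filter, mem_univ, true_and]; omega) (fun i _ _ => by positivity)
  have hG : Monotone G := fun a b hab => sum_le_sum_of_subset_of_nonneg
    (fun i => by simp only [mem_filter, mem_univ, true_and]; omega) (fun i _ _ => by positivity)
  have hsup : (Jr.sup' hJr fun j => (comp p l j : ℤ)) = F (Jr.sup' hJr l.idxOf) := by
    rw [apply_sup'_eq_sup'_comp hJr F fun _ _ => hF.map_max]
    congr 1
    ext j
    simp [F, comp_eq_sum_idxOf_le p hl]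
  have hinf : (Jr.inf' hJr fun j => (comp p l j : ℤ) - p j) = G (Jr.inf' hJr l.idxOf) := by
    rw [apply_inf'_eq_inf'_comp hJr G fun _ _ => hG.map_min]
    congr 1
    ext j
    simp [G, comp_eq_sum_idxOf_lt p hl]
  have hle := inf'_le_sup' hJr fun k => l.idxOf k
  rw [rent, hsup, hinf]
  simp only [F, G, sum_filter, ← sum_sub_distrib]
  refine sum_congr rfl fun i _ => ?_
  split_ifs <;> omega

lemma List.idxOf_le_idxOf_iff_of_pairwise {α β : Type*} [DecidableEq α] [LinearOrder β]
    {f : α → β} {l : List α} (hl : l.Pairwise fun a b => f a < f b) {i j : α} (hi : i ∈ l)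
    (hj : j ∈ l) : l.idxOf i ≤ l.idxOf j ↔ f i ≤ f j := by
  induction l with
  | nil => simp at hi
  | cons a t ih =>
    rw [List.pairwise_cons] at hl
    have hne : ∀ k ∈ t, a ≠ k := fun k hk hak => (hl.1 k hk).ne (by rw [hak])
    rcases List.mem_cons.1 hi with rfl | hi' <;> rcases List.mem_cons.1 hj with rfl | hj'
    · simp
    · simpa [List.idxOf_cons_self] using (hl.1 j hj').le
    · simpa [List.idxOf_cons_self, List.idxOf_cons_ne _ (hne i hi')] using hl.1 i hi'
    · simpa [List.idxOf_cons_ne _ (hne i hi'), List.idxOf_cons_ne _ (hne j hj')] using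
        ih hl.2 hi' hj'

lemma min'_lt_and_lt_max'_of_mem_Hset {Jr : Finset (Fin n)} {hJr : Jr.Nonempty} {i : Fin n}
    (hi : i ∈ Hset Jr hJr) : Jr.min' hJr < i ∧ i < Jr.max' hJr := by
  obtain ⟨hIcc, hiJr⟩ := mem_sdiff.1 hi
  obtain ⟨h₁, h₂⟩ := mem_Icc.1 hIcc
  exact ⟨h₁.lt_of_ne fun h => hiJr (h ▸ Jr.min'_mem hJr),
    h₂.lt_of_ne fun h => hiJr (h ▸ Jr.max'_mem hJr)⟩

lemma mem_sortF {S : Finset (Fin n)} {i : Fin n} : i ∈ sortF S ↔ i ∈ S :=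
  mem_sort _

lemma pairwise_append_sortF {f : Fin n → ℕ} {L : List (Fin n)} {S : Finset (Fin n)} {c : ℕ}
    (hL : L.Pairwise (fun a b => toLex (f a, a) < toLex (f b, b)) ∧ ∀ a ∈ L, f a < c)
    (hS : ∀ i ∈ S, f i = c) :
    (L ++ sortF S).Pairwise (fun a b => toLex (f a, a) < toLex (f b, b)) ∧
      ∀ a ∈ L ++ sortF S, f a < c + 1 := by
  refine ⟨List.pairwise_append.2 ⟨hL.1, ?_, fun a ha b hb => ?_⟩, fun a ha => ?_⟩
  · refine (sortedLT_sort S).pairwise.imp_of_mem fun {a b} ha hb hab => ?_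
    rw [Prod.Lex.toLex_lt_toLex, hS a (mem_sortF.1 ha), hS b (mem_sortF.1 hb)]
    exact Or.inr ⟨rfl, hab⟩
  · rw [Prod.Lex.toLex_lt_toLex, hS b (mem_sortF.1 hb)]
    exact Or.inl (hL.2 a ha)
  · rcases List.mem_append.1 ha with ha | ha
    · exact (hL.2 a ha).trans (Nat.lt_succ_self c)
    · rw [hS a (mem_sortF.1 ha)]
      exact Nat.lt_succ_self c

section FiveBlock

variable {Jr : Finset (Fin n)} {hJr : Jr.Nonempty} {X Y : Finset (Fin n)}

variable (Jr hJr X Y) in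
/-- The block (numbered `0, …, 4`) of `σ_{X,Y}` containing job `i`, when `X, Y ⊆ H` are
disjoint. -/
def blockIndex (i : Fin n) : ℕ :=
  if i < Jr.min' hJr then 0 else if i ∈ X then 1 else if i ∈ Y then 3
  else if i ≤ Jr.max' hJr then 2 else 4

lemma blockIndex_eq_zero_iff {i : Fin n} : blockIndex Jr hJr X Y i = 0 ↔ i < Jr.min' hJr := by
  unfold blockIndex; grind

lemma blockIndex_eq_one_iff (hX : X ⊆ Hset Jr hJr) {i : Fin n} :
    blockIndex Jr hJr X Y i = 1 ↔ i ∈ X := by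
  have := fun hi : i ∈ X => min'_lt_and_lt_max'_of_mem_Hset (hX hi)
  unfold blockIndex; grind

lemma blockIndex_eq_two_iff {i : Fin n} :
    blockIndex Jr hJr X Y i = 2 ↔ i ∈ Icc (Jr.min' hJr) (Jr.max' hJr) \ (X ∪ Y) := by
  unfold blockIndex; grind

lemma blockIndex_eq_three_iff (hY : Y ⊆ Hset Jr hJr) (hXY : Disjoint X Y) {i : Fin n} :
    blockIndex Jr hJr X Y i = 3 ↔ i ∈ Y := by
  have := fun hi : i ∈ Y => min'_lt_and_lt_max'_of_mem_Hset (hY hi)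
  have := fun hi : i ∈ X => disjoint_left.1 hXY hi
  unfold blockIndex; grind

lemma blockIndex_eq_four_iff (hX : X ⊆ Hset Jr hJr) (hY : Y ⊆ Hset Jr hJr) {i : Fin n} :
    blockIndex Jr hJr X Y i = 4 ↔ Jr.max' hJr < i := by
  have := Jr.min'_le_max' hJr
  have := fun hi : i ∈ X => min'_lt_and_lt_max'_of_mem_Hset (hX hi)
  have := fun hi : i ∈ Y => min'_lt_and_lt_max'_of_mem_Hset (hY hi)
  unfold blockIndex; grind

lemma blockIndex_le_four {i : Fin n} : blockIndex Jr hJr X Y i ≤ 4 := by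
  unfold blockIndex; split_ifs <;> omega

lemma fiveBlock_pairwise (hX : X ⊆ Hset Jr hJr) (hY : Y ⊆ Hset Jr hJr) (hXY : Disjoint X Y) :
    (fiveBlock Jr hJr X Y).Pairwise fun a b =>
      toLex (blockIndex Jr hJr X Y a, a) < toLex (blockIndex Jr hJr X Y b, b) :=
  (pairwise_append_sortF (pairwise_append_sortF (pairwise_append_sortF
    (pairwise_append_sortF (pairwise_append_sortF (L := []) ⟨List.Pairwise.nil, by simp⟩
      fun _ hi => blockIndex_eq_zero_iff.2 (mem_Iio.1 hi))
      fun _ hi => (blockIndex_eq_one_iff hX).2 hi)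
      fun _ hi => blockIndex_eq_two_iff.2 hi)
      fun _ hi => (blockIndex_eq_three_iff hY hXY).2 hi)
      fun _ hi => (blockIndex_eq_four_iff hX hY).2 (mem_Ioi.1 hi)).1

lemma mem_fiveBlock (i : Fin n) : i ∈ fiveBlock Jr hJr X Y := by
  simp only [fiveBlock, List.mem_append, mem_sortF, mem_Iio, mem_Ioi, mem_sdiff, mem_Icc,
    mem_union]
  grind

lemma fiveBlock_isSchedule (hX : X ⊆ Hset Jr hJr) (hY : Y ⊆ Hset Jr hJr) (hXY : Disjoint X Y) :
    IsSchedule (fiveBlock Jr hJr X Y) := by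
  have hnodup : (fiveBlock Jr hJr X Y).Nodup :=
    (fiveBlock_pairwise hX hY hXY).imp fun hab hba => (hba ▸ hab).false
  exact (List.perm_ext_iff_of_nodup hnodup (List.nodup_finRange n)).2 fun i => by
    simp [mem_fiveBlock]

lemma idxOf_fiveBlock_le_iff (hX : X ⊆ Hset Jr hJr) (hY : Y ⊆ Hset Jr hJr) (hXY : Disjoint X Y)
    {i j : Fin n} : (fiveBlock Jr hJr X Y).idxOf i ≤ (fiveBlock Jr hJr X Y).idxOf j ↔
      blockIndex Jr hJr X Y i < blockIndex Jr hJr X Y j ∨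
        blockIndex Jr hJr X Y i = blockIndex Jr hJr X Y j ∧ i ≤ j := by
  rw [List.idxOf_le_idxOf_iff_of_pairwise (fiveBlock_pairwise hX hY hXY) (mem_fiveBlock i)
    (mem_fiveBlock j), Prod.Lex.toLex_le_toLex]

lemma rent_fiveBlock_le (p : Fin n → ℕ) (hX : X ⊆ Hset Jr hJr) (hY : Y ⊆ Hset Jr hJr)
    (hXY : Disjoint X Y) :
    rent p Jr hJr (fiveBlock Jr hJr X Y) ≤
      ∑ i ∈ Icc (Jr.min' hJr) (Jr.max' hJr) \ (X ∪ Y), (p i : ℤ) := by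
  have hJr_mid : ∀ k ∈ Jr, blockIndex Jr hJr X Y k = 2 := fun k hk => by
    rw [blockIndex_eq_two_iff, mem_sdiff, mem_Icc, mem_union]
    exact ⟨⟨Jr.min'_le k hk, Jr.le_max' k hk⟩, fun h => h.elim
      (fun hkX => (mem_sdiff.1 (hX hkX)).2 hk) fun hkY => (mem_sdiff.1 (hY hkY)).2 hk⟩
  rw [rent_eq_sum p Jr hJr (fiveBlock_isSchedule hX hY hXY)]
  refine sum_le_sum_of_subset_of_nonneg (fun i hi => ?_) fun i _ _ => by positivity
  obtain ⟨a, ha, hai⟩ := exists_mem_eq_inf' hJr fun k => (fiveBlock Jr hJr X Y).idxOf k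
  obtain ⟨b, hb, hbi⟩ := exists_mem_eq_sup' hJr fun k => (fiveBlock Jr hJr X Y).idxOf k
  simp only [mem_filter, mem_univ, true_and, hai, hbi, idxOf_fiveBlock_le_iff hX hY hXY,
    hJr_mid a ha, hJr_mid b hb] at hi
  rw [← blockIndex_eq_two_iff (hJr := hJr)]
  omega

lemma blockIndex_eq_or_of_subset {X' : Finset (Fin n)} (hX' : X' ⊆ X) (k : Fin n) :
    blockIndex Jr hJr X' ((X ∪ Y) \ X') k = blockIndex Jr hJr X Y k ∨
      blockIndex Jr hJr X Y k = 1 ∧ blockIndex Jr hJr X' ((X ∪ Y) \ X') k = 3 := by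
  have := @hX' k
  unfold blockIndex
  grind

variable (Jr hJr) in
lemma exists_fiveBlock_le_of_isSchedule (p : Fin n → ℕ) {d : Fin n → ℤ} (hd : Monotone d)
    (hne : (univ : Finset (Fin n)).Nonempty) {l : List (Fin n)} (hl : IsSchedule l) :
    ∃ X Y, X ⊆ Hset Jr hJr ∧ Y ⊆ Hset Jr hJr ∧ Disjoint X Y ∧
      ∑ i ∈ Icc (Jr.min' hJr) (Jr.max' hJr) \ (X ∪ Y), (p i : ℤ) ≤ rent p Jr hJr l ∧
      Lmax p d hne (fiveBlock Jr hJr X Y) ≤ Lmax p d hne l := by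
  set first := Jr.inf' hJr fun k => l.idxOf k
  set last := Jr.sup' hJr fun k => l.idxOf k
  have hfirst : first ≤ last := inf'_le_sup' hJr _
  set X := (Hset Jr hJr).filter fun i => l.idxOf i < first
  set Y := (Hset Jr hJr).filter fun i => last < l.idxOf i
  have hX : X ⊆ Hset Jr hJr := filter_subset _ _
  have hY : Y ⊆ Hset Jr hJr := filter_subset _ _
  have hXY : Disjoint X Y := disjoint_filter.2 fun i _ h₁ h₂ => by omega
  have h₁ : ∀ i, blockIndex Jr hJr X Y i = 1 → l.idxOf i < first := fun i hi =>
    (mem_filter.1 ((blockIndex_eq_one_iff hX).1 hi)).2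
  have h₃ : ∀ i, blockIndex Jr hJr X Y i = 3 → last < l.idxOf i := fun i hi =>
    (mem_filter.1 ((blockIndex_eq_three_iff hY hXY).1 hi)).2
  have h₂ : ∀ i, blockIndex Jr hJr X Y i = 2 → first ≤ l.idxOf i ∧ l.idxOf i ≤ last := by
    intro i hi
    obtain ⟨hIcc, hiXY⟩ := mem_sdiff.1 (blockIndex_eq_two_iff.1 hi)
    by_cases hiJr : i ∈ Jr
    · exact ⟨inf'_le _ hiJr, le_sup' (fun k => l.idxOf k) hiJr⟩
    · have hiH : i ∈ Hset Jr hJr := mem_sdiff.2 ⟨hIcc, hiJr⟩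
      simp only [mem_union, X, Y, mem_filter, hiH, true_and] at hiXY
      omega
  refine ⟨X, Y, hX, hY, hXY, ?_, ?_⟩
  · rw [rent_eq_sum p Jr hJr hl]
    exact sum_le_sum_of_subset_of_nonneg
      (fun i hi => mem_filter.2 ⟨mem_univ i, h₂ i (blockIndex_eq_two_iff.2 hi)⟩)
      fun i _ _ => by positivity
  · refine Lmax_le_Lmax_of_forall_le_or_idxOf_lt p hd hne hl (fiveBlock_isSchedule hX hY hXY)
      fun i j hij => ?_
    rw [idxOf_fiveBlock_le_iff hX hY hXY] at hij
    -- if `j < i`, then `i` lies in an earlier block than `j`, both in blocks `1, 2, 3`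
    -- (block `0` holds the smallest indices, block `4` the largest), and `l` processes
    -- these three blocks before, among and after its r-jobs
    have := @blockIndex_eq_zero_iff _ _ hJr X Y i
    have := @blockIndex_eq_zero_iff _ _ hJr X Y j
    have := blockIndex_eq_four_iff hX hY (i := i)
    have := blockIndex_eq_four_iff hX hY (i := j)
    have := @blockIndex_le_four _ _ hJr X Y i
    have := @blockIndex_le_four _ _ hJr X Y j
    have := h₁ i; have := h₂ i; have := h₂ j; have := h₃ j
    omega

lemma exists_ordered_fiveBlock_le (p : Fin n → ℕ) {d : Fin n → ℤ} (hd : Monotone d)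
    (hne : (univ : Finset (Fin n)).Nonempty) (hX : X ⊆ Hset Jr hJr) (hY : Y ⊆ Hset Jr hJr)
    (hXY : Disjoint X Y) :
    ∃ X' Y', X' ⊆ Hset Jr hJr ∧ Y' ⊆ Hset Jr hJr ∧ Disjoint X' Y' ∧
      (∀ x ∈ X', ∀ y ∈ Y', x < y) ∧ X' ∪ Y' = X ∪ Y ∧
      Lmax p d hne (fiveBlock Jr hJr X' Y') ≤ Lmax p d hne (fiveBlock Jr hJr X Y) := by
  set X' := X.filter fun x => ∀ y ∈ Y, x < y
  set Y' := (X ∪ Y) \ X'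
  have hX'X : X' ⊆ X := filter_subset _ _
  have hX' : X' ⊆ Hset Jr hJr := hX'X.trans hX
  have hY' : Y' ⊆ Hset Jr hJr := sdiff_subset.trans (union_subset hX hY)
  have hXY' : Disjoint X' Y' := disjoint_sdiff
  have hlt : ∀ x ∈ X', ∀ y ∈ Y', x < y := by
    intro x hx y hy
    obtain ⟨hxX, hxY⟩ := mem_filter.1 hx
    obtain ⟨hyXY, hyX'⟩ := mem_sdiff.1 hy
    rcases mem_union.1 hyXY with hyX | hyY
    · obtain ⟨z, hz, hzy⟩ : ∃ z ∈ Y, z ≤ y := by simpa [X', hyX] using hyX'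
      exact (hxY z hz).trans_le hzy
    · exact hxY y hyY
  refine ⟨X', Y', hX', hY', hXY', hlt,
    union_sdiff_of_subset (hX'X.trans subset_union_left), ?_⟩
  refine Lmax_le_Lmax_of_prefix_subset p hd hne (fiveBlock_isSchedule hX hY hXY)
    (fiveBlock_isSchedule hX' hY' hXY') fun j => ?_
  simp only [idxOf_fiveBlock_le_iff hX hY hXY, idxOf_fiveBlock_le_iff hX' hY' hXY']
  have hb : ∀ k, blockIndex Jr hJr X' Y' k = blockIndex Jr hJr X Y k ∨
      blockIndex Jr hJr X Y k = 1 ∧ blockIndex Jr hJr X' Y' k = 3 :=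
    blockIndex_eq_or_of_subset hX'X
  rcases hb j with hj | ⟨hj₁, hj₃⟩
  · exact ⟨j, le_rfl, fun i hi => by have := hb i; omega⟩
  obtain ⟨y, hy, hyj⟩ : ∃ y ∈ Y, y < j := by
    have hjX := (blockIndex_eq_one_iff hX).1 hj₁
    have hjX' : j ∉ X' := fun h => by
      have := (blockIndex_eq_one_iff (Y := Y') hX').2 h
      omega
    obtain ⟨y, hy, hyj⟩ : ∃ y ∈ Y, y ≤ j := by simpa [X', hjX] using hjX'
    exact ⟨y, hy, hyj.lt_of_ne fun h => disjoint_left.1 hXY hjX (h ▸ hy)⟩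
  have hYj : (Y.filter (· < j)).Nonempty := ⟨y, mem_filter.2 ⟨hy, hyj⟩⟩
  obtain ⟨hqY, hqj⟩ := mem_filter.1 ((Y.filter (· < j)).max'_mem hYj)
  have hq₃ := (blockIndex_eq_three_iff hY hXY).2 hqY
  refine ⟨_, hqj.le, fun i hi => ?_⟩
  have hiq : blockIndex Jr hJr X Y i = 3 → i ≤ j → i ≤ (Y.filter (· < j)).max' hYj :=
    fun h hij => le_max' _ i (mem_filter.2 ⟨(blockIndex_eq_three_iff hY hXY).1 h,
      hij.lt_of_ne fun hij => by rw [hij] at h; omega⟩)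
  have := hb i
  omega

end FiveBlock

theorem stmt10_general {n : ℕ} (p : Fin n → ℕ)
    (d : Fin n → ℤ) (hd : Monotone d)
    (hne : (Finset.univ : Finset (Fin n)).Nonempty)
    (Jr : Finset (Fin n)) (hJr : Jr.Nonempty) (Kr : ℤ)
    (hfeas : ∃ l : List (Fin n), IsSchedule l ∧ rent p Jr hJr l ≤ Kr) :
    ∃ X Y : Finset (Fin n), X ⊆ Hset Jr hJr ∧ Y ⊆ Hset Jr hJr ∧ Disjoint X Y ∧
      (∀ x ∈ X, ∀ y ∈ Y, x < y) ∧
      rent p Jr hJr (fiveBlock Jr hJr X Y) ≤ Kr ∧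
      ∀ l : List (Fin n), IsSchedule l → rent p Jr hJr l ≤ Kr →
        Lmax p d hne (fiveBlock Jr hJr X Y) ≤ Lmax p d hne l := by
  obtain ⟨l, ⟨hl, hlK⟩, hopt⟩ := Set.exists_min_image
    {l | IsSchedule l ∧ rent p Jr hJr l ≤ Kr} (Lmax p d hne)
    (finite_setOf_isSchedule.subset fun _ h => h.1) hfeas
  obtain ⟨X, Y, hX, hY, hXY, hrent, hLmax⟩ :=
    exists_fiveBlock_le_of_isSchedule Jr hJr p hd hne hl
  obtain ⟨X', Y', hX', hY', hXY', hlt, hunion, hLmax'⟩ :=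
    exists_ordered_fiveBlock_le p hd hne hX hY hXY
  refine ⟨X', Y', hX', hY', hXY', hlt, ?_, fun l' hl' hl'K =>
    hLmax'.trans (hLmax.trans (hopt l' ⟨hl', hl'K⟩))⟩
  calc rent p Jr hJr (fiveBlock Jr hJr X' Y')
      ≤ ∑ i ∈ Icc (Jr.min' hJr) (Jr.max' hJr) \ (X' ∪ Y'), (p i : ℤ) :=
        rent_fiveBlock_le p hX' hY' hXY'
    _ ≤ rent p Jr hJr l := hunion ▸ hrent
    _ ≤ Kr := hlK

/-- five-block structure for `1|er|max L_j`. For every instance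
(jobs in EDD order) admitting a feasible sequence, there are `X*, Y* ⊆ H` with
`max X* < min Y*` such that the five-block sequence `σ_{X*,Y*}` is feasible and
minimizes the maximum lateness among all feasible sequences. -/
theorem stmt10 {n : ℕ} (p : Fin n → ℕ) (hp : ∀ j, 0 < p j)
    (d : Fin n → ℤ) (hd : Monotone d)
    (hne : (Finset.univ : Finset (Fin n)).Nonempty)
    (Jr : Finset (Fin n)) (hJr : Jr.Nonempty) (Kr : ℤ)
    (hfeas : ∃ l : List (Fin n), IsSchedule l ∧ rent p Jr hJr l ≤ Kr) :
    ∃ X Y : Finset (Fin n), X ⊆ Hset Jr hJr ∧ Y ⊆ Hset Jr hJr ∧ Disjoint X Y ∧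
      (∀ x ∈ X, ∀ y ∈ Y, x < y) ∧
      rent p Jr hJr (fiveBlock Jr hJr X Y) ≤ Kr ∧
      ∀ l : List (Fin n), IsSchedule l → rent p Jr hJr l ≤ Kr →
        Lmax p d hne (fiveBlock Jr hJr X Y) ≤ Lmax p d hne l :=
  stmt10_general p d hd hne Jr hJr Kr hfeas
end

section
/- Let X ⊆ H and κ > max X, where jobs are in EDD order. Then f'_{κ+1}(X ∪ {κ}) = f'_κ(X) + p_κ, and f'_{κ+1}(X) = max{ f'_κ(X), p(J[1,κ]) − d_κ }. -/
variable {n : ℕ}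

/-- `f'_κ(X) = max_{j ∈ J[α,κ-1]} (C_j^{σ_{X,∅}} - d_j)`. -/
def fDash (p : Fin n → ℕ) (d : Fin n → ℤ) (Jr : Finset (Fin n)) (hJr : Jr.Nonempty)
    (X : Finset (Fin n)) (κ : Fin n)
    (h : (Finset.Ico (Jr.min' hJr) κ).Nonempty) : ℤ :=
  (Finset.Ico (Jr.min' hJr) κ).sup' h
    (fun j => (comp p (fiveBlock Jr hJr X ∅) j : ℤ) - d j)

/-!
Moving `κ` from the third block of `σ_{X,∅}` to the end of the second delays every job of the
third block that precedes `κ` by exactly `p_κ` and leaves the jobs of `X` in place. The jobs of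
`X`, and `κ` in its new position, finish no later than `α` did (resp. `α` plus `p_κ`) and are
due no earlier, so they are dominated by `α` and `f'` shifts by `p_κ`. In `σ_{X,∅}` the job
`κ` is preceded by exactly `J[1,κ-1]` because `X` lies below `κ`, so `C_κ = p(J[1,κ])`.
-/

namespace List

variable {α : Type*}

theorem takeWhile_ne_append_of_mem [DecidableEq α] {j : α} {l₁ : List α} (l₂ : List α)
    (h : j ∈ l₁) :
    (l₁ ++ l₂).takeWhile (fun k => decide (k ≠ j)) = l₁.takeWhile (fun k => decide (k ≠ j)) := by
  rw [takeWhile_append, if_neg]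
  intro hlen
  have := takeWhile_eq_self_iff.mp ((takeWhile_prefix _).eq_of_length hlen) j h
  simp at this

theorem takeWhile_ne_eq_filter_lt [LinearOrder α] {l : List α} (hl : l.Pairwise (· < ·))
    {j : α} (hj : j ∈ l) :
    l.takeWhile (fun k => decide (k ≠ j)) = l.filter (fun k => decide (k < j)) := by
  induction l with
  | nil => simp at hj
  | cons a t ih =>
    obtain ⟨ha, ht⟩ := pairwise_cons.mp hl
    rcases mem_cons.mp hj with rfl | hjt
    · have : t.filter (fun k => decide (k < j)) = [] :=
        filter_eq_nil_iff.mpr fun k hk => by simpa using (ha k hk).le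
      simp [this]
    · have haj : a < j := ha j hjt
      rw [takeWhile_cons_of_pos (by simpa using haj.ne), filter_cons_of_pos (by simpa using haj),
        ih ht hjt]

end List

section Completion

open Finset

variable (p : Fin n → ℕ)

theorem comp_append_of_mem {l₁ : List (Fin n)} (l₂ : List (Fin n)) {j : Fin n} (h : j ∈ l₁) :
    comp p (l₁ ++ l₂) j = comp p l₁ j := by
  rw [comp, comp, List.takeWhile_ne_append_of_mem l₂ h]

theorem comp_append_of_notMem {l₁ : List (Fin n)} (l₂ : List (Fin n)) {j : Fin n}
    (h : j ∉ l₁) : comp p (l₁ ++ l₂) j = (l₁.map p).sum + comp p l₂ j := by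
  rw [comp, comp, List.takeWhile_append_of_pos fun k hk => by simpa using ne_of_mem_of_not_mem hk h,
    List.map_append, List.sum_append, add_assoc]

theorem sum_map_sortF_filter (q : Fin n → Bool) (s : Finset (Fin n)) :
    (((sortF s).filter q).map p).sum = ∑ k ∈ s with q k, p k := by
  rw [sortF, ← List.sum_toFinset p ((sort_nodup s _).filter q), List.toFinset_filter,
    sort_toFinset]

theorem sum_map_sortF (s : Finset (Fin n)) : ((sortF s).map p).sum = ∑ k ∈ s, p k := by
  simpa using sum_map_sortF_filter p (fun _ => true) s

theorem comp_sortF {s : Finset (Fin n)} {j : Fin n} (hj : j ∈ s) :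
    comp p (sortF s) j = ∑ k ∈ s with k ≤ j, p k := by
  have hsplit : {k ∈ s | k ≤ j} = insert j {k ∈ s | k < j} := by
    ext k; simp only [mem_filter, mem_insert, le_iff_lt_or_eq]; grind
  rw [comp, sortF, List.takeWhile_ne_eq_filter_lt (sortedLT_sort s).pairwise ((mem_sort _).2 hj),
    ← sortF,
    sum_map_sortF_filter, hsplit, sum_insert (by simp), add_comm]
  simp

end Completion

section FiveBlock

open Finset

variable (p : Fin n → ℕ) {Jr : Finset (Fin n)} (hJr : Jr.Nonempty) {X Y : Finset (Fin n)}
  {j : Fin n}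

theorem comp_fiveBlock_of_mem (hj : j ∈ X) (hαj : Jr.min' hJr ≤ j) :
    comp p (fiveBlock Jr hJr X Y) j =
      ∑ k ∈ Iio (Jr.min' hJr), p k + ∑ k ∈ X with k ≤ j, p k := by
  have hjA : j ∉ sortF (Iio (Jr.min' hJr)) := by
    simpa only [sortF, mem_sort, mem_Iio, not_lt] using hαj
  have hjX : j ∈ sortF X := by simpa [sortF] using hj
  simp only [fiveBlock, List.append_assoc]
  rw [comp_append_of_notMem p _ hjA, comp_append_of_mem p _ hjX, comp_sortF p hj,
    sum_map_sortF]

theorem comp_fiveBlock_of_mem_Icc_sdiff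
    (hj : j ∈ Icc (Jr.min' hJr) (Jr.max' hJr) \ (X ∪ Y)) :
    comp p (fiveBlock Jr hJr X Y) j =
      ∑ k ∈ Iio (Jr.min' hJr), p k + ∑ k ∈ X, p k +
        ∑ k ∈ Icc (Jr.min' hJr) (Jr.max' hJr) \ (X ∪ Y) with k ≤ j, p k := by
  have hjA : j ∉ sortF (Iio (Jr.min' hJr)) := by
    simpa only [sortF, mem_sort, mem_Iio, not_lt] using (mem_Icc.mp (mem_sdiff.mp hj).1).1
  have hjX : j ∉ sortF X := by simp_all [sortF]
  have hjM : j ∈ sortF (Icc (Jr.min' hJr) (Jr.max' hJr) \ (X ∪ Y)) := by simpa [sortF] using hj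
  simp only [fiveBlock, List.append_assoc]
  rw [comp_append_of_notMem p _ hjA, comp_append_of_notMem p _ hjX, comp_append_of_mem p _ hjM,
    comp_sortF p hj, sum_map_sortF, sum_map_sortF, add_assoc]

theorem comp_fiveBlock_le_of_mem (hj : j ∈ X) (hαj : Jr.min' hJr ≤ j) :
    comp p (fiveBlock Jr hJr X Y) j ≤ ∑ k ∈ Iio (Jr.min' hJr), p k + ∑ k ∈ X, p k := by
  rw [comp_fiveBlock_of_mem p hJr hj hαj]
  gcongr
  exact filter_subset _ _

theorem le_comp_fiveBlock_of_mem_Icc_sdiff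
    (hj : j ∈ Icc (Jr.min' hJr) (Jr.max' hJr) \ (X ∪ Y)) :
    ∑ k ∈ Iio (Jr.min' hJr), p k + ∑ k ∈ X, p k ≤ comp p (fiveBlock Jr hJr X Y) j := by
  rw [comp_fiveBlock_of_mem_Icc_sdiff p hJr hj]
  exact Nat.le_add_right _ _

theorem comp_fiveBlock_insert_of_mem {κ : Fin n} (hj : j ∈ X) (hαj : Jr.min' hJr ≤ j)
    (hjκ : j < κ) :
    comp p (fiveBlock Jr hJr (insert κ X) Y) j = comp p (fiveBlock Jr hJr X Y) j := by
  have hfilter : {k ∈ insert κ X | k ≤ j} = {k ∈ X | k ≤ j} := by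
    rw [filter_insert, if_neg hjκ.not_ge]
  rw [comp_fiveBlock_of_mem p hJr (mem_insert_of_mem hj) hαj, comp_fiveBlock_of_mem p hJr hj hαj,
    hfilter]

theorem comp_fiveBlock_insert_of_mem_Icc_sdiff {κ : Fin n} (hκX : κ ∉ X)
    (hj : j ∈ Icc (Jr.min' hJr) (Jr.max' hJr) \ (X ∪ Y)) (hjκ : j < κ) :
    comp p (fiveBlock Jr hJr (insert κ X) Y) j = comp p (fiveBlock Jr hJr X Y) j + p κ := by
  have hj' : j ∈ Icc (Jr.min' hJr) (Jr.max' hJr) \ (insert κ X ∪ Y) := by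
    simp only [mem_sdiff, mem_union, mem_insert] at hj ⊢
    exact ⟨hj.1, by rintro ((rfl | h) | h) <;> simp_all⟩
  have hfilter : {k ∈ Icc (Jr.min' hJr) (Jr.max' hJr) \ (insert κ X ∪ Y) | k ≤ j} =
      {k ∈ Icc (Jr.min' hJr) (Jr.max' hJr) \ (X ∪ Y) | k ≤ j} := by
    ext k
    simp only [mem_filter, mem_sdiff, mem_union, mem_insert]
    grind
  rw [comp_fiveBlock_of_mem_Icc_sdiff p hJr hj', comp_fiveBlock_of_mem_Icc_sdiff p hJr hj,
    hfilter, sum_insert hκX]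
  ring

theorem comp_fiveBlock_eq_sum_Iic (hj : j ∈ Icc (Jr.min' hJr) (Jr.max' hJr) \ X)
    (hX : X ⊆ Icc (Jr.min' hJr) j) :
    comp p (fiveBlock Jr hJr X ∅) j = ∑ k ∈ Iic j, p k := by
  have hαj : Jr.min' hJr ≤ j := (mem_Icc.mp (mem_sdiff.mp hj).1).1
  have hjβ : j ≤ Jr.max' hJr := (mem_Icc.mp (mem_sdiff.mp hj).1).2
  have hfilter : {k ∈ Icc (Jr.min' hJr) (Jr.max' hJr) \ (X ∪ ∅) | k ≤ j} =
      Icc (Jr.min' hJr) j \ X := by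
    ext k
    simp only [mem_filter, mem_sdiff, mem_Icc, union_empty]
    grind
  have hIic : Iic j = Iio (Jr.min' hJr) ∪ Icc (Jr.min' hJr) j := by
    ext k
    simp only [mem_Iic, mem_union, mem_Iio, mem_Icc]
    grind
  rw [comp_fiveBlock_of_mem_Icc_sdiff p hJr (by simpa using hj), hfilter, hIic,
    sum_union (disjoint_left.mpr fun k hk hk' => by grind),
    ← sum_sdiff hX, add_assoc, add_comm (∑ k ∈ X, p k)]

end FiveBlock

theorem Fin.Ico_eq_Icc_of_val_eq_add_one {a b b' : Fin n} (hb : (b' : ℕ) = b + 1) :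
    Finset.Ico a b' = Finset.Icc a b := by
  ext k
  simp only [Finset.mem_Ico, Finset.mem_Icc, Fin.lt_def, Fin.le_def]
  omega

section FDash

open Finset

variable (p : Fin n → ℕ) {d : Fin n → ℤ} {Jr : Finset (Fin n)} (hJr : Jr.Nonempty)
  {X : Finset (Fin n)}

theorem min'_lt_of_mem_Hset {κ : Fin n} (hκ : κ ∈ Hset Jr hJr) : Jr.min' hJr < κ := by
  obtain ⟨hκIcc, hκJr⟩ := mem_sdiff.mp hκ
  exact (mem_Icc.mp hκIcc).1.lt_of_ne fun h => hκJr (h ▸ Jr.min'_mem hJr)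

theorem min'_notMem_of_subset_Hset (hX : X ⊆ Hset Jr hJr) : Jr.min' hJr ∉ X :=
  fun h => (mem_sdiff.mp (hX h)).2 (Jr.min'_mem hJr)

theorem min'_mem_Icc_sdiff (hX : X ⊆ Hset Jr hJr) :
    Jr.min' hJr ∈ Icc (Jr.min' hJr) (Jr.max' hJr) \ (X ∪ ∅) := by
  rw [union_empty]
  exact mem_sdiff.mpr ⟨mem_Icc.mpr ⟨le_rfl, Jr.min'_le_max' hJr⟩,
    min'_notMem_of_subset_Hset hJr hX⟩

theorem comp_fiveBlock_sub_le_min' (hd : Monotone d) (hX : X ⊆ Hset Jr hJr) {j : Fin n}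
    (hj : j ∈ X) :
    (comp p (fiveBlock Jr hJr X ∅) j : ℤ) - d j ≤
      (comp p (fiveBlock Jr hJr X ∅) (Jr.min' hJr) : ℤ) - d (Jr.min' hJr) := by
  have hαj : Jr.min' hJr ≤ j := (mem_Icc.mp (mem_sdiff.mp (hX hj)).1).1
  have hC : comp p (fiveBlock Jr hJr X ∅) j ≤ comp p (fiveBlock Jr hJr X ∅) (Jr.min' hJr) :=
    (comp_fiveBlock_le_of_mem p hJr hj hαj).trans
      (le_comp_fiveBlock_of_mem_Icc_sdiff p hJr (min'_mem_Icc_sdiff hJr hX))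
  have := hd hαj
  omega

variable {κ κ' : Fin n}

theorem fDash_insert (hd : Monotone d) (hX : X ⊆ Hset Jr hJr) (hκ : κ ∈ Hset Jr hJr)
    (hmax : ∀ x ∈ X, x < κ) (hsucc : (κ' : ℕ) = κ + 1)
    (h1 : (Ico (Jr.min' hJr) κ).Nonempty) (h2 : (Ico (Jr.min' hJr) κ').Nonempty) :
    fDash p d Jr hJr (insert κ X) κ' h2 = fDash p d Jr hJr X κ h1 + p κ := by
  rw [fDash, fDash]
  set α := Jr.min' hJr
  set g := fun j => (comp p (fiveBlock Jr hJr X ∅) j : ℤ) - d j with hg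
  set g' := fun j => (comp p (fiveBlock Jr hJr (insert κ X) ∅) j : ℤ) - d j with hg'
  have hακ : α < κ := min'_lt_of_mem_Hset hJr hκ
  have hαX : α ∉ X := min'_notMem_of_subset_Hset hJr hX
  have hκX : κ ∉ X := fun h => (hmax κ h).false
  have hαIco : α ∈ Ico α κ := left_mem_Ico.mpr hακ
  have hIco : Ico α κ' = Icc α κ := Fin.Ico_eq_Icc_of_val_eq_add_one hsucc
  have hshift : ∀ j ∈ Ico α κ, j ∉ X → g' j = g j + p κ := by
    intro j hj hjX
    have hjM : j ∈ Icc α (Jr.max' hJr) \ (X ∪ ∅) := by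
      simp only [union_empty, mem_sdiff, mem_Icc, mem_Ico] at hj ⊢
      exact ⟨⟨hj.1, hj.2.le.trans (mem_Icc.mp (mem_sdiff.mp hκ).1).2⟩, hjX⟩
    simp only [hg, hg', comp_fiveBlock_insert_of_mem_Icc_sdiff p hJr hκX hjM (mem_Ico.mp hj).2]
    push_cast
    ring
  have hfix : ∀ j ∈ X, g' j = g j := fun j hj => by
    simp only [hg, hg', comp_fiveBlock_insert_of_mem p hJr hj
      (mem_Icc.mp (mem_sdiff.mp (hX hj)).1).1 (hmax j hj)]
  have hdom : ∀ j ∈ X, g j ≤ g α := fun j hj => comp_fiveBlock_sub_le_min' p hJr hd hX hj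
  have hκle : g' κ ≤ g α + p κ := by
    have hC : comp p (fiveBlock Jr hJr (insert κ X) ∅) κ ≤
        ∑ k ∈ Iio α, p k + ∑ k ∈ insert κ X, p k :=
      comp_fiveBlock_le_of_mem p hJr (mem_insert_self κ X) hακ.le
    have hCα : ∑ k ∈ Iio α, p k + ∑ k ∈ X, p k ≤ comp p (fiveBlock Jr hJr X ∅) α :=
      le_comp_fiveBlock_of_mem_Icc_sdiff p hJr (min'_mem_Icc_sdiff hJr hX)
    rw [sum_insert hκX] at hC
    have := hd hακ.le
    simp only [hg, hg']
    omega
  apply le_antisymm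
  · refine sup'_le _ _ fun j hj => ?_
    rw [hIco] at hj
    rcases (mem_Icc.mp hj).2.eq_or_lt with hjκ | hjκ
    · rw [hjκ]
      exact hκle.trans (by gcongr; exact le_sup' g hαIco)
    have hj' : j ∈ Ico α κ := mem_Ico.mpr ⟨(mem_Icc.mp hj).1, hjκ⟩
    by_cases hjX : j ∈ X
    · calc g' j = g j := hfix j hjX
        _ ≤ g α := hdom j hjX
        _ ≤ (Ico α κ).sup' h1 g := le_sup' g hαIco
        _ ≤ (Ico α κ).sup' h1 g + p κ := le_add_of_nonneg_right (Int.natCast_nonneg _)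
    · rw [hshift j hj' hjX]
      gcongr
      exact le_sup' g hj'
  · have hsub : Ico α κ ⊆ Ico α κ' := hIco ▸ Ico_subset_Icc_self
    rw [← le_sub_iff_add_le]
    refine sup'_le _ _ fun j hj => le_sub_iff_add_le.mpr ?_
    by_cases hjX : j ∈ X
    · calc g j + p κ ≤ g α + p κ := by grw [hdom j hjX]
        _ = g' α := (hshift α hαIco hαX).symm
        _ ≤ (Ico α κ').sup' h2 g' := le_sup' g' (hsub hαIco)
    · rw [← hshift j hj hjX]
      exact le_sup' g' (hsub hj)

theorem fDash_eq_max (hX : X ⊆ Hset Jr hJr) (hκ : κ ∈ Hset Jr hJr)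
    (hmax : ∀ x ∈ X, x < κ) (hsucc : (κ' : ℕ) = κ + 1)
    (h1 : (Ico (Jr.min' hJr) κ).Nonempty) (h2 : (Ico (Jr.min' hJr) κ').Nonempty) :
    fDash p d Jr hJr X κ' h2 =
      max (fDash p d Jr hJr X κ h1) ((∑ j ∈ Iic κ, (p j : ℤ)) - d κ) := by
  have hκM : κ ∈ Icc (Jr.min' hJr) (Jr.max' hJr) \ X :=
    mem_sdiff.mpr ⟨(mem_sdiff.mp hκ).1, fun h => (hmax κ h).false⟩
  have hXκ : X ⊆ Icc (Jr.min' hJr) κ := fun x hx =>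
    mem_Icc.mpr ⟨(mem_Icc.mp (mem_sdiff.mp (hX hx)).1).1, (hmax x hx).le⟩
  have hIco : Ico (Jr.min' hJr) κ' = insert κ (Ico (Jr.min' hJr) κ) :=
    (Fin.Ico_eq_Icc_of_val_eq_add_one hsucc).trans
      (Ico_insert_right (min'_lt_of_mem_Hset hJr hκ).le).symm
  rw [fDash, fDash, sup'_congr h2 hIco fun _ _ => rfl, sup'_insert h1,
    comp_fiveBlock_eq_sum_Iic p hJr hκM hXκ, max_comm]
  push_cast
  rfl

end FDash

theorem stmt11_general {n : ℕ} (p : Fin n → ℕ)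
    (d : Fin n → ℤ) (hd : Monotone d)
    (Jr : Finset (Fin n)) (hJr : Jr.Nonempty)
    (X : Finset (Fin n)) (hX : X ⊆ Hset Jr hJr)
    (κ κ' : Fin n) (hκ : κ ∈ Hset Jr hJr) (hmax : ∀ x ∈ X, x < κ)
    (hsucc : (κ' : ℕ) = (κ : ℕ) + 1)
    (h1 : (Finset.Ico (Jr.min' hJr) κ).Nonempty)
    (h2 : (Finset.Ico (Jr.min' hJr) κ').Nonempty) :
    fDash p d Jr hJr (X ∪ {κ}) κ' h2 = fDash p d Jr hJr X κ h1 + p κ ∧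
    fDash p d Jr hJr X κ' h2 =
      max (fDash p d Jr hJr X κ h1) ((∑ j ∈ Finset.Iic κ, (p j : ℤ)) - d κ) := by
  rw [Finset.union_singleton]
  exact ⟨fDash_insert p hJr hd hX hκ hmax hsucc h1 h2, fDash_eq_max p hJr hX hκ hmax hsucc h1 h2⟩

/-- for `X ⊆ H` and `κ ∈ H` with `κ > max X` (jobs in EDD order),
`f'_{κ+1}(X ∪ {κ}) = f'_κ(X) + p_κ` and
`f'_{κ+1}(X) = max { f'_κ(X), p(J[1,κ]) - d_κ }`. -/
theorem stmt11 {n : ℕ} (p : Fin n → ℕ) (hp : ∀ j, 0 < p j)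
    (d : Fin n → ℤ) (hd : Monotone d)
    (Jr : Finset (Fin n)) (hJr : Jr.Nonempty)
    (X : Finset (Fin n)) (hX : X ⊆ Hset Jr hJr)
    (κ κ' : Fin n) (hκ : κ ∈ Hset Jr hJr) (hmax : ∀ x ∈ X, x < κ)
    (hsucc : (κ' : ℕ) = (κ : ℕ) + 1)
    (h1 : (Finset.Ico (Jr.min' hJr) κ).Nonempty)
    (h2 : (Finset.Ico (Jr.min' hJr) κ').Nonempty) :
    fDash p d Jr hJr (X ∪ {κ}) κ' h2 = fDash p d Jr hJr X κ h1 + p κ ∧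
    fDash p d Jr hJr X κ' h2 =
      max (fDash p d Jr hJr X κ h1) ((∑ j ∈ Finset.Iic κ, (p j : ℤ)) - d κ) :=
  stmt11_general p d hd Jr hJr X hX κ κ' hκ hmax hsucc h1 h2
end

section
/- Monotonicity of X_λ and Y_λ: with jobs in WSPT order, if j ∈ X_λ then every o-job j' with α ≤ j' ≤ j is also in X_λ; symmetrically, if j ∈ Y_λ then every o-job j' with j ≤ j' ≤ β is in Y_λ. -/
variable {n : ℕ}

/-- `A_j = J^r ∩ [α, j]`. -/
def Aset (Jr : Finset (Fin n)) (hJr : Jr.Nonempty) (j : Fin n) : Finset (Fin n) :=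
  Jr ∩ Finset.Icc (Jr.min' hJr) j

/-- `B_j = J^r ∩ [j, β]`. -/
def Bset (Jr : Finset (Fin n)) (hJr : Jr.Nonempty) (j : Fin n) : Finset (Fin n) :=
  Jr ∩ Finset.Icc j (Jr.max' hJr)

/-- `w(S)/p(S)` as a rational. -/
def ratio (w p : Fin n → ℕ) (S : Finset (Fin n)) : ℚ :=
  (∑ i ∈ S, (w i : ℚ)) / (∑ i ∈ S, (p i : ℚ))

/-- membership in `X_λ`. -/
def XlamMem (p w : Fin n → ℕ) (Jr : Finset (Fin n)) (hJr : Jr.Nonempty)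
    (lam : ℚ) (j : Fin n) : Prop :=
  j ∈ Hset Jr hJr ∧
    (w j : ℚ) / (p j : ℚ) >
      ((∑ i ∈ Aset Jr hJr j, (w i : ℚ)) - lam) / (∑ i ∈ Aset Jr hJr j, (p i : ℚ)) ∧
    (w j : ℚ) / (p j : ℚ) ≥ ratio w p Jr

/-- membership in `Y_λ`. -/
def YlamMem (p w : Fin n → ℕ) (Jr : Finset (Fin n)) (hJr : Jr.Nonempty)
    (lam : ℚ) (j : Fin n) : Prop :=
  j ∈ Hset Jr hJr ∧
    (w j : ℚ) / (p j : ℚ) <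
      ((∑ i ∈ Bset Jr hJr j, (w i : ℚ)) + lam) / (∑ i ∈ Bset Jr hJr j, (p i : ℚ)) ∧
    (w j : ℚ) / (p j : ℚ) < ratio w p Jr

/-! Passing from `j` to `j' ≤ j` removes from `A_j` only r-jobs `i ≤ j`, whose ratio `w_i / p_i`
is at least `r = w_j / p_j` by the WSPT order. Removing items of ratio at least `r` from a pool
with `(w - λ) / p < r` keeps that inequality, and `w_{j'} / p_{j'} ≥ r` only helps. The case of
`Y_λ` is the mirror image. -/

section MediantBounds

open Finset

variable {ι K : Type*} [DecidableEq ι] [Field K] [LinearOrder K] [IsStrictOrderedRing K]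
  {p w : ι → K} {s u : Finset ι} {r c : K}

theorem sum_sub_div_sum_lt_of_subset (hp : ∀ i ∈ u, 0 < p i) (hsu : s ⊆ u) (hs : s.Nonempty)
    (hr : ∀ i ∈ u \ s, r ≤ w i / p i)
    (h : (∑ i ∈ u, w i - c) / ∑ i ∈ u, p i < r) :
    (∑ i ∈ s, w i - c) / ∑ i ∈ s, p i < r := by
  have hps : 0 < ∑ i ∈ s, p i := sum_pos (fun i hi => hp i (hsu hi)) hs
  have hpu : 0 < ∑ i ∈ u, p i := sum_pos hp (hs.mono hsu)
  have hdiff : r * ∑ i ∈ u \ s, p i ≤ ∑ i ∈ u \ s, w i := by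
    rw [mul_sum]
    exact sum_le_sum fun i hi => (le_div_iff₀ (hp i (sdiff_subset hi))).1 (hr i hi)
  rw [div_lt_iff₀ hpu, ← sum_sdiff hsu (f := w), ← sum_sdiff hsu (f := p)] at h
  rw [div_lt_iff₀ hps]
  linarith

theorem lt_sum_add_div_sum_of_subset (hp : ∀ i ∈ u, 0 < p i) (hsu : s ⊆ u) (hs : s.Nonempty)
    (hr : ∀ i ∈ u \ s, w i / p i ≤ r)
    (h : r < (∑ i ∈ u, w i + c) / ∑ i ∈ u, p i) :
    r < (∑ i ∈ s, w i + c) / ∑ i ∈ s, p i := by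
  have hps : 0 < ∑ i ∈ s, p i := sum_pos (fun i hi => hp i (hsu hi)) hs
  have hpu : 0 < ∑ i ∈ u, p i := sum_pos hp (hs.mono hsu)
  have hdiff : ∑ i ∈ u \ s, w i ≤ r * ∑ i ∈ u \ s, p i := by
    rw [mul_sum]
    exact sum_le_sum fun i hi => (div_le_iff₀ (hp i (sdiff_subset hi))).1 (hr i hi)
  rw [lt_div_iff₀ hpu, ← sum_sdiff hsu (f := w), ← sum_sdiff hsu (f := p)] at h
  rw [lt_div_iff₀ hps]
  linarith

end MediantBounds

theorem antitone_div_of_wspt {p w : Fin n → ℕ} (hp : ∀ j, 0 < p j)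
    (hwspt : ∀ i j : Fin n, i ≤ j → w j * p i ≤ w i * p j) :
    Antitone fun j => (w j : ℚ) / p j := fun i j hij => by
  rw [div_le_div_iff₀ (Nat.cast_pos.2 (hp j)) (Nat.cast_pos.2 (hp i))]
  exact_mod_cast hwspt i j hij

section Monotonicity

variable {Jr : Finset (Fin n)} {hJr : Jr.Nonempty}

theorem mem_Hset {j : Fin n} :
    j ∈ Hset Jr hJr ↔ (Jr.min' hJr ≤ j ∧ j ≤ Jr.max' hJr) ∧ j ∉ Jr := by
  rw [Hset, Finset.mem_sdiff, Finset.mem_Icc]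

theorem mem_Hset_of_le {j j' : Fin n} (hj : j ∈ Hset Jr hJr) (hj' : j' ∉ Jr)
    (hαj' : Jr.min' hJr ≤ j') (hj'j : j' ≤ j) : j' ∈ Hset Jr hJr :=
  mem_Hset.2 ⟨⟨hαj', hj'j.trans (mem_Hset.1 hj).1.2⟩, hj'⟩

theorem mem_Hset_of_ge {j j' : Fin n} (hj : j ∈ Hset Jr hJr) (hj' : j' ∉ Jr)
    (hjj' : j ≤ j') (hj'β : j' ≤ Jr.max' hJr) : j' ∈ Hset Jr hJr :=
  mem_Hset.2 ⟨⟨(mem_Hset.1 hj).1.1.trans hjj', hj'β⟩, hj'⟩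

theorem Aset_mono {j j' : Fin n} (h : j' ≤ j) : Aset Jr hJr j' ⊆ Aset Jr hJr j :=
  Finset.inter_subset_inter_left (Finset.Icc_subset_Icc_right h)

theorem Bset_anti {j j' : Fin n} (h : j ≤ j') : Bset Jr hJr j' ⊆ Bset Jr hJr j :=
  Finset.inter_subset_inter_left (Finset.Icc_subset_Icc_left h)

theorem le_of_mem_Aset {i j : Fin n} (h : i ∈ Aset Jr hJr j) : i ≤ j :=
  (Finset.mem_Icc.1 (Finset.mem_inter.1 h).2).2

theorem le_of_mem_Bset {i j : Fin n} (h : i ∈ Bset Jr hJr j) : j ≤ i :=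
  (Finset.mem_Icc.1 (Finset.mem_inter.1 h).2).1

theorem Aset_nonempty {j : Fin n} (h : Jr.min' hJr ≤ j) : (Aset Jr hJr j).Nonempty :=
  ⟨_, Finset.mem_inter.2 ⟨Jr.min'_mem hJr, Finset.mem_Icc.2 ⟨le_rfl, h⟩⟩⟩

theorem Bset_nonempty {j : Fin n} (h : j ≤ Jr.max' hJr) : (Bset Jr hJr j).Nonempty :=
  ⟨_, Finset.mem_inter.2 ⟨Jr.max'_mem hJr, Finset.mem_Icc.2 ⟨h, le_rfl⟩⟩⟩

variable {p w : Fin n → ℕ} {lam : ℚ}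

theorem XlamMem.of_le (hp : ∀ j, 0 < p j) (hanti : Antitone fun j => (w j : ℚ) / p j)
    {j j' : Fin n} (hj : XlamMem p w Jr hJr lam j) (hj' : j' ∉ Jr)
    (hαj' : Jr.min' hJr ≤ j') (hj'j : j' ≤ j) : XlamMem p w Jr hJr lam j' := by
  obtain ⟨hjH, hjA, hjR⟩ := hj
  have hratio : (w j : ℚ) / p j ≤ w j' / p j' := hanti hj'j
  refine ⟨mem_Hset_of_le hjH hj' hαj' hj'j, ?_, hjR.trans hratio⟩
  refine lt_of_lt_of_le ?_ hratio
  exact sum_sub_div_sum_lt_of_subset (fun i _ => Nat.cast_pos.2 (hp i)) (Aset_mono hj'j)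
    (Aset_nonempty hαj') (fun i hi => hanti (le_of_mem_Aset (Finset.mem_sdiff.1 hi).1)) hjA

theorem YlamMem.of_ge (hp : ∀ j, 0 < p j) (hanti : Antitone fun j => (w j : ℚ) / p j)
    {j j' : Fin n} (hj : YlamMem p w Jr hJr lam j) (hj' : j' ∉ Jr)
    (hjj' : j ≤ j') (hj'β : j' ≤ Jr.max' hJr) : YlamMem p w Jr hJr lam j' := by
  obtain ⟨hjH, hjB, hjR⟩ := hj
  have hratio : (w j' : ℚ) / p j' ≤ w j / p j := hanti hjj'
  refine ⟨mem_Hset_of_ge hjH hj' hjj' hj'β, ?_, hratio.trans_lt hjR⟩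
  refine lt_of_le_of_lt hratio ?_
  exact lt_sum_add_div_sum_of_subset (fun i _ => Nat.cast_pos.2 (hp i)) (Bset_anti hjj')
    (Bset_nonempty hj'β) (fun i hi => hanti (le_of_mem_Bset (Finset.mem_sdiff.1 hi).1)) hjB

end Monotonicity

theorem stmt15_general {n : ℕ} (p w : Fin n → ℕ) (hp : ∀ j, 0 < p j)
    (hwspt : ∀ i j : Fin n, i ≤ j → w j * p i ≤ w i * p j)
    (Jr : Finset (Fin n)) (hJr : Jr.Nonempty) (lam : ℚ) :
    (∀ j, XlamMem p w Jr hJr lam j →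
      ∀ j', j' ∉ Jr → Jr.min' hJr ≤ j' → j' ≤ j → XlamMem p w Jr hJr lam j') ∧
    (∀ j, YlamMem p w Jr hJr lam j →
      ∀ j', j' ∉ Jr → j ≤ j' → j' ≤ Jr.max' hJr → YlamMem p w Jr hJr lam j') := by
  have hanti := antitone_div_of_wspt hp hwspt
  exact ⟨fun _ hj _ hj' hαj' hj'j => hj.of_le hp hanti hj' hαj' hj'j,
    fun _ hj _ hj' hjj' hj'β => hj.of_ge hp hanti hj' hjj' hj'β⟩

/-- monotonicity of `X_λ` and `Y_λ` (jobs in WSPT order): if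
`j ∈ X_λ` then every o-job `j'` with `α ≤ j' ≤ j` is in `X_λ`; if `j ∈ Y_λ`
then every o-job `j'` with `j ≤ j' ≤ β` is in `Y_λ`. -/
theorem stmt15 {n : ℕ} (p w : Fin n → ℕ) (hp : ∀ j, 0 < p j)
    (hwspt : ∀ i j : Fin n, i ≤ j → w j * p i ≤ w i * p j)
    (Jr : Finset (Fin n)) (hJr : Jr.Nonempty) (lam : ℚ) (hlam : 0 ≤ lam) :
    (∀ j, XlamMem p w Jr hJr lam j →
      ∀ j', j' ∉ Jr → Jr.min' hJr ≤ j' → j' ≤ j → XlamMem p w Jr hJr lam j') ∧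
    (∀ j, YlamMem p w Jr hJr lam j →
      ∀ j', j' ∉ Jr → j ≤ j' → j' ≤ Jr.max' hJr → YlamMem p w Jr hJr lam j') :=
  stmt15_general p w hp hwspt Jr hJr lam
end
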